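/- arXiv:1111.2713 — 5 statements merged into one kernel-verified Lean document; each statement's English description precedes it below -/
import Mathlib

section
/- Let q be a prime power and let n, k, δ be integers with 0 ≤ δ ≤ k ≤ n. Then C_q(n, k, k−δ) ≤ A_q(n, 2δ+2, k) + [n choose k−δ]_q − [k choose k−δ]_q · A_q(n, 2δ+2, k). -/
open Module

/-- The Gaussian binomial coefficient `[n choose k]_q`, as a real number:
`∏_{i=0}^{k-1} (q^{n-i}-1)/(q^{k-i}-1)`. -/
noncomputable def gaussBinom (q n k : ℕ) : ℝ :=
  ∏ i ∈ Finset.range k, ((q : ℝ) ^ (n - i) - 1) / ((q : ℝ) ^ (k - i) - 1)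

/-- `C` is a constant dimension code in the Grassmannian `G_q(n,k)` with
minimum subspace distance at least `d`: all its elements are `k`-dimensional
subspaces of `F^n`, and `d_S(U,V) = 2k - 2 dim(U ⊓ V) ≥ d` for distinct `U,V ∈ C`. -/
def IsGrassmannCode (F : Type) [Field F] (n k d : ℕ)
    (C : Finset (Submodule F (Fin n → F))) : Prop :=
  (∀ U ∈ C, finrank F ↥U = k) ∧
  ∀ U ∈ C, ∀ V ∈ C, U ≠ V → d ≤ 2 * k - 2 * finrank F ↥(U ⊓ V)

/-- `A_q(n,d,k)`: the maximum size of an `(n,M,d,k)_q` code. -/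
noncomputable def maxCodeSize (F : Type) [Field F] (n d k : ℕ) : ℕ :=
  sSup {M | ∃ C : Finset (Submodule F (Fin n → F)), IsGrassmannCode F n k d C ∧ C.card = M}

/-- `C` is a `q`-covering design `C_q(n,k,r)`: a set of `k`-dimensional subspaces of
`F^n` such that every `r`-dimensional subspace is contained in at least one of them. -/
def IsCoveringDesign (F : Type) [Field F] (n k r : ℕ)
    (C : Finset (Submodule F (Fin n → F))) : Prop :=
  (∀ U ∈ C, finrank F ↥U = k) ∧
  ∀ W : Submodule F (Fin n → F), finrank F ↥W = r → ∃ U ∈ C, W ≤ U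

/-- `𝒞_q(n,k,r)`: the minimum size of a `q`-covering design `C_q(n,k,r)`. -/
noncomputable def minCoverSize (F : Type) [Field F] (n k r : ℕ) : ℕ :=
  sInf {M | ∃ C : Finset (Submodule F (Fin n → F)), IsCoveringDesign F n k r C ∧ C.card = M}

/-!
Take an optimal code `C` of minimum distance `2δ + 2`. Two distinct codewords meet in dimension
less than `k - δ`, so no `(k - δ)`-space lies in two of them, and the codewords contain exactly
`|C| · [k choose k-δ]_q` of the `[n choose k-δ]_q` spaces of dimension `k - δ`. Adding, for each
of the remaining ones, some `k`-space containing it yields a covering design.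
-/

theorem gaussBinom_mul_prod {q : ℕ} (hq : 1 < q) {m r : ℕ} (hr : r ≤ m) :
    gaussBinom q m r * ∏ i ∈ Finset.range r, ((q : ℝ) ^ r - (q : ℝ) ^ i) =
      ∏ i ∈ Finset.range r, ((q : ℝ) ^ m - (q : ℝ) ^ i) := by
  rw [gaussBinom, ← Finset.prod_mul_distrib]
  refine Finset.prod_congr rfl fun i hi => ?_
  have hir : i < r := Finset.mem_range.mp hi
  have hden : (q : ℝ) ^ (r - i) - 1 ≠ 0 :=
    (sub_pos.mpr (one_lt_pow₀ (mod_cast hq) (by omega))).ne'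
  have hsplit {j : ℕ} (hij : i ≤ j) : (q : ℝ) ^ j = q ^ i * q ^ (j - i) := by
    rw [← pow_add, Nat.add_sub_cancel' hij]
  rw [hsplit hir.le, hsplit (hir.le.trans hr)]
  field_simp

namespace Submodule

variable {K V : Type*} [Field K] [AddCommGroup V] [Module K V]

theorem exists_le_finrank_eq [FiniteDimensional K V] (W : Submodule K V) {k : ℕ}
    (hWk : finrank K W ≤ k) (hk : k ≤ finrank K V) : ∃ U, W ≤ U ∧ finrank K U = k := by
  obtain ⟨d, rfl⟩ := Nat.exists_eq_add_of_le hWk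
  induction d with
  | zero => exact ⟨W, le_rfl, rfl⟩
  | succ d ih =>
    obtain ⟨U, hWU, hU⟩ := ih (by omega) (by omega)
    obtain ⟨v, hv⟩ : ∃ v, v ∉ U := by
      by_contra! h
      have := finrank_top K V
      rw [← eq_top_iff'.mpr h] at this
      omega
    exact ⟨U ⊔ K ∙ v, hWU.trans le_sup_left, by rw [finrank_sup_span_singleton hv, hU, add_assoc]⟩

theorem span_range_eq_iff_forall_mem {r : ℕ} {s : Fin r → V} (hs : LinearIndependent K s)
    {W : Submodule K V} [FiniteDimensional K W] (hW : finrank K W = r) :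
    span K (Set.range s) = W ↔ ∀ i, s i ∈ W := by
  refine ⟨fun h i => h ▸ subset_span (Set.mem_range_self i), fun h => ?_⟩
  refine eq_of_le_of_finrank_le (span_le.mpr (Set.range_subset_iff.mpr h)) ?_
  rw [finrank_span_eq_card hs, Fintype.card_fin, hW]

def linearIndependentSpanEquiv {r : ℕ} (W : Submodule K V) [FiniteDimensional K W]
    (hW : finrank K W = r) :
    {s : Fin r → V // LinearIndependent K s ∧ span K (Set.range s) = W} ≃
      {t : Fin r → W // LinearIndependent K t} where
  toFun s := ⟨fun i => ⟨s.1 i, (span_range_eq_iff_forall_mem s.2.1 hW).mp s.2.2 i⟩,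
    (LinearMap.linearIndependent_iff W.subtype W.ker_subtype).mp s.2.1⟩
  invFun t := ⟨W.subtype ∘ t.1, t.2.map' W.subtype W.ker_subtype,
    (span_range_eq_iff_forall_mem (t.2.map' W.subtype W.ker_subtype) hW).mpr fun i => (t.1 i).2⟩
  left_inv _ := rfl
  right_inv _ := rfl

theorem card_finrank_eq_and_le (U : Submodule K V) (r : ℕ) :
    Nat.card {W : Submodule K V // finrank K W = r ∧ W ≤ U} =
      Nat.card {W : Submodule K U // finrank K W = r} := by
  refine (Nat.card_congr ?_).symm
  refine (Equiv.subtypeEquiv (MapSubtype.orderIso U).toEquiv fun W => ?_).trans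
    ((Equiv.subtypeSubtypeEquivSubtypeInter _ _).trans (Equiv.subtypeEquivRight fun _ => and_comm))
  rw [← finrank_map_subtype_eq U W]
  rfl

variable [Fintype K] [FiniteDimensional K V]

theorem card_finrank_eq_mul_prod {r : ℕ} (hr : r ≤ finrank K V) :
    Nat.card {W : Submodule K V // finrank K W = r} *
        ∏ i : Fin r, (Fintype.card K ^ r - Fintype.card K ^ i.val) =
      ∏ i : Fin r, (Fintype.card K ^ finrank K V - Fintype.card K ^ i.val) := by
  -- count the linearly independent `r`-tuples of `V` according to the subspace they span
  have : Finite V := Module.finite_of_finite K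
  classical
  have : Fintype (Submodule K V) := Fintype.ofFinite _
  let span' (s : {s : Fin r → V // LinearIndependent K s}) :
      {W : Submodule K V // finrank K W = r} :=
    ⟨span K (Set.range s.1), by rw [finrank_span_eq_card s.2, Fintype.card_fin]⟩
  have hfiber (W : {W : Submodule K V // finrank K W = r}) :
      {s // span' s = W} ≃ {t : Fin r → W.1 // LinearIndependent K t} :=
    ((Equiv.subtypeEquivRight fun s => by simp [span', Subtype.ext_iff]).trans
      (Equiv.subtypeSubtypeEquivSubtypeInter (LinearIndependent K ·)
        (fun s => span K (Set.range s) = W.1))).trans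
      (linearIndependentSpanEquiv W.1 W.2)
  calc Nat.card {W : Submodule K V // finrank K W = r} *
        ∏ i : Fin r, (Fintype.card K ^ r - Fintype.card K ^ i.val)
      = ∑ W : {W : Submodule K V // finrank K W = r},
          Nat.card {t : Fin r → W.1 // LinearIndependent K t} := by
        have hW (W : {W : Submodule K V // finrank K W = r}) :
            Nat.card {t : Fin r → W.1 // LinearIndependent K t} =
              ∏ i : Fin r, (Fintype.card K ^ r - Fintype.card K ^ i.val) := by
          rw [card_linearIndependent W.2.ge, W.2]
        simp only [hW, Finset.sum_const, Finset.card_univ, smul_eq_mul, Nat.card_eq_fintype_card]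
    _ = ∑ W, Nat.card {s // span' s = W} :=
        Finset.sum_congr rfl fun W _ => (Nat.card_congr (hfiber W)).symm
    _ = ∏ i : Fin r, (Fintype.card K ^ finrank K V - Fintype.card K ^ i.val) := by
        rw [← Nat.card_sigma, Nat.card_congr (Equiv.sigmaFiberEquiv span'),
          card_linearIndependent hr]

theorem card_finrank_eq_gaussBinom {r : ℕ} (hr : r ≤ finrank K V) :
    (Nat.card {W : Submodule K V // finrank K W = r} : ℝ) =
      gaussBinom (Fintype.card K) (finrank K V) r := by
  have hq : 1 < Fintype.card K := Fintype.one_lt_card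
  have hcast {m : ℕ} (hm : r ≤ m) :
      ((∏ i : Fin r, (Fintype.card K ^ m - Fintype.card K ^ i.val) : ℕ) : ℝ) =
        ∏ i ∈ Finset.range r, ((Fintype.card K : ℝ) ^ m - (Fintype.card K : ℝ) ^ i) := by
    rw [Fin.prod_univ_eq_prod_range (fun i => Fintype.card K ^ m - Fintype.card K ^ i),
      Nat.cast_prod]
    refine Finset.prod_congr rfl fun i hi => ?_
    rw [Nat.cast_sub (Nat.pow_le_pow_right Fintype.card_pos
      ((Finset.mem_range.mp hi).le.trans hm)), Nat.cast_pow, Nat.cast_pow]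
  have hpos : 0 < ∏ i ∈ Finset.range r, ((Fintype.card K : ℝ) ^ r - (Fintype.card K : ℝ) ^ i) :=
    Finset.prod_pos fun i hi =>
      sub_pos.mpr (pow_lt_pow_right₀ (mod_cast hq) (Finset.mem_range.mp hi))
  refine mul_right_cancel₀ hpos.ne' ?_
  rw [gaussBinom_mul_prod hq hr, ← hcast le_rfl, ← hcast hr, ← Nat.cast_mul,
    card_finrank_eq_mul_prod hr]

theorem card_finrank_eq_and_exists_le {r : ℕ} (C : Finset (Submodule K V))
    (hC : (C : Set (Submodule K V)).Pairwise fun U U' => finrank K ↥(U ⊓ U') < r) :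
    Nat.card {W : Submodule K V // finrank K W = r ∧ ∃ U ∈ C, W ≤ U} =
      ∑ U ∈ C, Nat.card {W : Submodule K V // finrank K W = r ∧ W ≤ U} := by
  classical
  have : Finite V := Module.finite_of_finite K
  have : Fintype (Submodule K V) := Fintype.ofFinite _
  simp only [Nat.card_eq_fintype_card, Fintype.card_subtype]
  rw [← Finset.card_biUnion]
  · congr 1
    ext W
    simp only [Finset.mem_filter, Finset.mem_univ, true_and, Finset.mem_biUnion]
    exact ⟨fun ⟨hW, U, hU, hWU⟩ => ⟨U, hU, hW, hWU⟩, fun ⟨U, hU, hW, hWU⟩ => ⟨hW, U, hU, hWU⟩⟩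
  · intro U hU U' hU' hne
    refine Finset.disjoint_left.mpr fun W hW hW' => ?_
    simp only [Finset.mem_filter, Finset.mem_univ, true_and] at hW hW'
    have := finrank_mono (le_inf hW.2 hW'.2)
    have := hC hU hU' hne
    omega

end Submodule

theorem IsGrassmannCode.finrank_inf_lt {F : Type} [Field F] {n k δ : ℕ}
    {C : Finset (Submodule F (Fin n → F))} (hC : IsGrassmannCode F n k (2 * δ + 2) C) :
    (C : Set (Submodule F (Fin n → F))).Pairwise fun U U' => finrank F ↥(U ⊓ U') < k - δ := by
  intro U hU U' hU' hne
  have hdist := hC.2 U hU U' hU' hne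
  have hle := Submodule.finrank_mono (inf_le_left : U ⊓ U' ≤ U)
  rw [hC.1 U hU] at hle
  omega

theorem exists_isGrassmannCode_card_eq_maxCodeSize (F : Type) [Field F] [Fintype F]
    (n d k : ℕ) :
    ∃ C, IsGrassmannCode F n k d C ∧ C.card = maxCodeSize F n d k := by
  have : Fintype (Submodule F (Fin n → F)) := Fintype.ofFinite _
  refine Nat.sSup_mem (s := {M | ∃ C, IsGrassmannCode F n k d C ∧ C.card = M})
    ⟨0, ∅, ⟨by simp, by simp⟩, rfl⟩ ⟨Fintype.card (Submodule F (Fin n → F)), ?_⟩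
  rintro _ ⟨C, -, rfl⟩
  exact C.card_le_univ

theorem minCoverSize_le_card_add_card_sub {F : Type} [Field F] [Fintype F] {n k r : ℕ}
    (C : Finset (Submodule F (Fin n → F))) (hC : ∀ U ∈ C, finrank F U = k) (hrk : r ≤ k)
    (hkn : k ≤ n) :
    (minCoverSize F n k r : ℝ) ≤ C.card +
      ((Nat.card {W : Submodule F (Fin n → F) // finrank F W = r} : ℝ) -
        Nat.card {W : Submodule F (Fin n → F) // finrank F W = r ∧ ∃ U ∈ C, W ≤ U}) := by
  classical
  have : Fintype (Submodule F (Fin n → F)) := Fintype.ofFinite _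
  have hext (W : Submodule F (Fin n → F)) : ∃ U, finrank F W = r → W ≤ U ∧ finrank F U = k := by
    by_cases hW : finrank F W = r
    · obtain ⟨U, hU⟩ := W.exists_le_finrank_eq (hW ▸ hrk) (by simpa using hkn)
      exact ⟨U, fun _ => hU⟩
    · exact ⟨⊥, fun h => absurd h hW⟩
  choose ext hext using hext
  let G := Finset.univ.filter fun W : Submodule F (Fin n → F) => finrank F W = r
  let covered := G.filter fun W => ∃ U ∈ C, W ≤ U
  have hD : IsCoveringDesign F n k r (C ∪ (G \ covered).image ext) := by
    refine ⟨fun U hU => ?_, fun W hW => ?_⟩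
    · rcases Finset.mem_union.mp hU with hU | hU
      · exact hC U hU
      · obtain ⟨W, hW, rfl⟩ := Finset.mem_image.mp hU
        exact (hext W (by simpa [G] using (Finset.mem_sdiff.mp hW).1)).2
    · by_cases hcov : ∃ U ∈ C, W ≤ U
      · obtain ⟨U, hU, hWU⟩ := hcov
        exact ⟨U, Finset.mem_union_left _ hU, hWU⟩
      · refine ⟨ext W, Finset.mem_union_right _ (Finset.mem_image_of_mem _ ?_), (hext W hW).1⟩
        simp [G, covered, hW, hcov]
  have hcard : (C ∪ (G \ covered).image ext).card ≤ C.card + (G.card - covered.card) := by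
    rw [← Finset.card_sdiff_of_subset (Finset.filter_subset _ _)]
    exact (Finset.card_union_le _ _).trans (Nat.add_le_add_left Finset.card_image_le _)
  have hG : Nat.card {W : Submodule F (Fin n → F) // finrank F W = r} = G.card := by
    rw [Nat.card_eq_fintype_card, Fintype.card_subtype]
  have hcovered : Nat.card {W : Submodule F (Fin n → F) // finrank F W = r ∧ ∃ U ∈ C, W ≤ U} =
      covered.card := by
    simp only [Nat.card_eq_fintype_card, Fintype.card_subtype, covered, G, Finset.filter_filter]
  rw [hG, hcovered, ← Nat.cast_sub (Finset.card_le_card (Finset.filter_subset _ _))]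
  have hmin : minCoverSize F n k r ≤ (C ∪ (G \ covered).image ext).card :=
    Nat.sInf_le ⟨_, hD, rfl⟩
  exact_mod_cast hmin.trans hcard

theorem cover_le_code_general (F : Type) [Field F] [Fintype F] (n k δ : ℕ)
    (hkn : k ≤ n) :
    (minCoverSize F n k (k - δ) : ℝ) ≤
      (maxCodeSize F n (2 * δ + 2) k : ℝ) +
        gaussBinom (Fintype.card F) n (k - δ) -
        gaussBinom (Fintype.card F) k (k - δ) * (maxCodeSize F n (2 * δ + 2) k : ℝ) := by
  obtain ⟨C, hC, hcard⟩ := exists_isGrassmannCode_card_eq_maxCodeSize F n (2 * δ + 2) k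
  have hrk : k - δ ≤ k := Nat.sub_le k δ
  have hsub (U : Submodule F (Fin n → F)) (hU : U ∈ C) :
      (Nat.card {W : Submodule F (Fin n → F) // finrank F W = k - δ ∧ W ≤ U} : ℝ) =
        gaussBinom (Fintype.card F) k (k - δ) := by
    rw [Submodule.card_finrank_eq_and_le,
      Submodule.card_finrank_eq_gaussBinom (hC.1 U hU ▸ hrk), hC.1 U hU]
  have hcovered :
      (Nat.card {W : Submodule F (Fin n → F) // finrank F W = k - δ ∧ ∃ U ∈ C, W ≤ U} : ℝ) =
        C.card * gaussBinom (Fintype.card F) k (k - δ) := by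
    rw [Submodule.card_finrank_eq_and_exists_le C hC.finrank_inf_lt, Nat.cast_sum,
      Finset.sum_congr rfl hsub, Finset.sum_const, nsmul_eq_mul]
  calc (minCoverSize F n k (k - δ) : ℝ)
      ≤ C.card + ((Nat.card {W : Submodule F (Fin n → F) // finrank F W = k - δ} : ℝ) -
          Nat.card {W : Submodule F (Fin n → F) // finrank F W = k - δ ∧ ∃ U ∈ C, W ≤ U}) :=
        minCoverSize_le_card_add_card_sub C hC.1 hrk hkn
    _ = _ := by
      rw [hcovered, Submodule.card_finrank_eq_gaussBinom (by simpa using hrk.trans hkn),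
        finrank_fin_fun, hcard]
      ring

/-- `𝒞_q(n,k,k-δ) ≤ A_q(n,2δ+2,k) + [n choose k-δ]_q - [k choose k-δ]_q ⬝ A_q(n,2δ+2,k)`. -/
theorem cover_le_code (F : Type) [Field F] [Fintype F] (n k δ : ℕ)
    (hδk : δ ≤ k) (hkn : k ≤ n) :
    (minCoverSize F n k (k - δ) : ℝ) ≤
      (maxCodeSize F n (2 * δ + 2) k : ℝ) +
        gaussBinom (Fintype.card F) n (k - δ) -
        gaussBinom (Fintype.card F) k (k - δ) * (maxCodeSize F n (2 * δ + 2) k : ℝ) :=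
  cover_le_code_general F n k δ hkn
end

section
/- (Johnson bound for constant dimension codes) Let q be a prime power and let n, k, δ be integers with 1 ≤ k ≤ n and 0 ≤ δ ≤ k. Then A_q(n, 2δ+2, k) ≤ ((q^n − 1)/(q^k − 1)) · A_q(n−1, 2δ+2, k−1). -/
open Module

section Aux

variable (F : Type) [Field F] [Fintype F]

lemma code_bddAbove (n k d : ℕ) :
    BddAbove {M | ∃ C : Finset (Submodule F (Fin n → F)), IsGrassmannCode F n k d C ∧ C.card = M} := by
  have : Finite (Submodule F (Fin n → F)) := Finite.of_injective _ SetLike.coe_injective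
  have := Fintype.ofFinite (Submodule F (Fin n → F))
  refine ⟨Fintype.card (Submodule F (Fin n → F)), ?_⟩
  rintro M ⟨C, _, rfl⟩
  exact Finset.card_le_univ C

set_option synthInstance.maxHeartbeats 400000 in
/-- The quotient step: codewords through a fixed nonzero vector `v` give a code in
`G(n-1, k-1)` of the same size. -/
lemma filter_card_le (n k d : ℕ) (hk : 1 ≤ k) (hd : 0 < d)
    (C : Finset (Submodule F (Fin n → F))) (hC : IsGrassmannCode F n k d C)
    (v : Fin n → F) (hv : v ≠ 0)
    (Cv : Finset (Submodule F (Fin n → F))) (hCvC : Cv ⊆ C) (hvmem : ∀ U ∈ Cv, v ∈ U) :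
    Cv.card ≤ maxCodeSize F (n - 1) d (k - 1) := by
  classical
  set p : Submodule F (Fin n → F) := F ∙ v with hp
  have hp1 : finrank F p = 1 := finrank_span_singleton hv
  have hq : finrank F ((Fin n → F) ⧸ p) = n - 1 := by
    have h := p.finrank_quotient_add_finrank
    rw [Module.finrank_fin_fun, hp1] at h
    omega
  obtain ⟨e⟩ : Nonempty (((Fin n → F) ⧸ p) ≃ₗ[F] (Fin (n - 1) → F)) :=
    FiniteDimensional.nonempty_linearEquiv_of_finrank_eq
      (by rw [hq, Module.finrank_fin_fun])
  set f : (Fin n → F) →ₗ[F] (Fin (n - 1) → F) := e.toLinearMap ∘ₗ p.mkQ with hf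
  have hker : LinearMap.ker f = p := by
    rw [hf, LinearMap.ker_comp, LinearEquiv.ker, Submodule.comap_bot, Submodule.ker_mkQ]
  -- dimension of an image
  have hmapdim : ∀ U : Submodule F (Fin n → F), p ≤ U →
      finrank F (Submodule.map f U) + 1 = finrank F U := by
    intro U hU
    have hkU : LinearMap.ker f ≤ U := hker.le.trans hU
    have h1 := LinearMap.finrank_range_add_finrank_ker (f.domRestrict U)
    rw [LinearMap.range_domRestrict, LinearMap.ker_domRestrict, hker] at h1
    have h2 : finrank F (Submodule.comap U.subtype p) = 1 := by
      rw [LinearEquiv.finrank_eq (Submodule.comapSubtypeEquivOfLe hU), hp1]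
    rw [h2] at h1
    exact h1
  -- images of intersections
  have hmapinf : ∀ U V : Submodule F (Fin n → F), p ≤ U → p ≤ V →
      Submodule.map f (U ⊓ V) = Submodule.map f U ⊓ Submodule.map f V := by
    intro U V hU hV
    refine le_antisymm (le_inf (Submodule.map_mono inf_le_left)
      (Submodule.map_mono inf_le_right)) ?_
    rintro y ⟨⟨x, hxU, rfl⟩, ⟨x', hx'V, hfx'⟩⟩
    have hxV : x ∈ V := by
      have h3 : x - x' ∈ LinearMap.ker f := by
        simp [LinearMap.mem_ker, map_sub, hfx']
      have h4 : x - x' ∈ V := hV (hker ▸ h3)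
      simpa using V.add_mem h4 hx'V
    exact ⟨x, ⟨hxU, hxV⟩, rfl⟩
  -- injectivity
  have hinj : ∀ U V : Submodule F (Fin n → F), p ≤ U → p ≤ V →
      Submodule.map f U = Submodule.map f V → U = V := by
    intro U V hU hV h
    have h1 : Submodule.comap f (Submodule.map f U) = Submodule.comap f (Submodule.map f V) := by
      rw [h]
    rwa [Submodule.comap_map_eq, Submodule.comap_map_eq, hker, sup_eq_left.mpr hU,
      sup_eq_left.mpr hV] at h1
  have hple : ∀ U ∈ Cv, p ≤ U := fun U hU =>
    (Submodule.span_singleton_le_iff_mem v U).mpr (hvmem U hU)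
  set C' : Finset (Submodule F (Fin (n - 1) → F)) := Cv.image (Submodule.map f) with hC'
  have hcard : C'.card = Cv.card := by
    rw [hC']
    exact Finset.card_image_of_injOn fun U hU V hV h => hinj U V (hple U hU) (hple V hV) h
  have hcode : IsGrassmannCode F (n - 1) (k - 1) d C' := by
    constructor
    · intro U' hU'
      rw [hC', Finset.mem_image] at hU'
      obtain ⟨U, hU, rfl⟩ := hU'
      have := hmapdim U (hple U hU)
      have hUk : finrank F U = k := hC.1 U (hCvC hU)
      omega
    · intro U' hU' V' hV' hne
      rw [hC', Finset.mem_image] at hU' hV'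
      obtain ⟨U, hU, rfl⟩ := hU'
      obtain ⟨V, hV, rfl⟩ := hV'
      have hUV : U ≠ V := by rintro rfl; exact hne rfl
      have hdist := hC.2 U (hCvC hU) V (hCvC hV) hUV
      have hpUV : p ≤ U ⊓ V := le_inf (hple U hU) (hple V hV)
      have h1 := hmapdim (U ⊓ V) hpUV
      rw [hmapinf U V (hple U hU) (hple V hV)] at h1
      omega
  have hmem : C'.card ∈ {M | ∃ C : Finset (Submodule F (Fin (n - 1) → F)),
      IsGrassmannCode F (n - 1) (k - 1) d C ∧ C.card = M} := ⟨C', hcode, rfl⟩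
  calc Cv.card = C'.card := hcard.symm
    _ ≤ maxCodeSize F (n - 1) d (k - 1) := le_csSup (code_bddAbove F (n - 1) (k - 1) d) hmem

end Aux

/-- **Johnson bound for constant dimension codes.**
`A_q(n,2δ+2,k) ≤ ((q^n-1)/(q^k-1)) ⬝ A_q(n-1,2δ+2,k-1)`. -/
theorem johnson_bound (F : Type) [Field F] [Fintype F] (n k δ : ℕ)
    (hk : 1 ≤ k) (hkn : k ≤ n) (hδk : δ ≤ k) :
    (maxCodeSize F n (2 * δ + 2) k : ℝ) ≤
      (((Fintype.card F : ℝ) ^ n - 1) / ((Fintype.card F : ℝ) ^ k - 1)) *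
        (maxCodeSize F (n - 1) (2 * δ + 2) (k - 1) : ℝ) := by
  classical
  set d := 2 * δ + 2 with hd
  set q := Fintype.card F with hqdef
  have hq2 : 2 ≤ q := Fintype.one_lt_card
  -- the maximum is attained
  have hne : ({M | ∃ C : Finset (Submodule F (Fin n → F)),
      IsGrassmannCode F n k d C ∧ C.card = M} : Set ℕ).Nonempty :=
    ⟨0, ∅, ⟨fun U hU => absurd hU (Finset.notMem_empty U),
      fun U hU => absurd hU (Finset.notMem_empty U)⟩, rfl⟩
  obtain ⟨C, hC, hcard⟩ := Nat.sSup_mem hne (code_bddAbove F n k d)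
  set M := maxCodeSize F n d k with hM
  set A' := maxCodeSize F (n - 1) d (k - 1) with hA'
  have hMeq : M = C.card := by rw [hM]; unfold maxCodeSize; exact hcard.symm
  -- the set of nonzero vectors
  set V₀ : Finset (Fin n → F) := Finset.univ.erase 0 with hV₀
  have hV₀card : V₀.card = q ^ n - 1 := by
    rw [hV₀, Finset.card_erase_of_mem (Finset.mem_univ 0), Finset.card_univ,
      Fintype.card_fun, Fintype.card_fin]
  -- double counting
  have hcount : ∀ U ∈ C, (V₀.filter (fun v => v ∈ U)).card = q ^ k - 1 := by
    intro U hU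
    have h5 : V₀.filter (fun v => v ∈ U) = (Finset.univ.filter (fun v => v ∈ U)).erase 0 := by
      ext x
      simp [hV₀, Finset.mem_erase, and_comm]
    rw [h5, Finset.card_erase_of_mem (by simp [U.zero_mem]), ← Fintype.card_subtype]
    have h6 : Fintype.card {x // x ∈ U} = q ^ k := by
      rw [hqdef, card_eq_pow_finrank (K := F), hC.1 U hU]
    rw [h6]
  have hsum : C.card * (q ^ k - 1) = ∑ v ∈ V₀, (C.filter (fun U => v ∈ U)).card := by
    calc C.card * (q ^ k - 1) = ∑ _U ∈ C, (q ^ k - 1) := by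
          rw [Finset.sum_const, smul_eq_mul]
      _ = ∑ U ∈ C, (V₀.filter (fun v => v ∈ U)).card :=
          (Finset.sum_congr rfl fun U hU => (hcount U hU).symm)
      _ = ∑ U ∈ C, ∑ v ∈ V₀, if v ∈ U then 1 else 0 :=
          Finset.sum_congr rfl fun U _ => Finset.card_filter _ _
      _ = ∑ v ∈ V₀, ∑ U ∈ C, if v ∈ U then 1 else 0 := Finset.sum_comm
      _ = ∑ v ∈ V₀, (C.filter (fun U => v ∈ U)).card :=
          Finset.sum_congr rfl fun v _ => (Finset.card_filter _ _).symm
  have hkey : M * (q ^ k - 1) ≤ (q ^ n - 1) * A' := by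
    rw [hMeq, hsum]
    calc ∑ v ∈ V₀, (C.filter (fun U => v ∈ U)).card
        ≤ ∑ _v ∈ V₀, A' := by
          refine Finset.sum_le_sum fun v hv => ?_
          exact filter_card_le F n k d hk (by omega) C hC v (Finset.ne_of_mem_erase hv)
            _ (Finset.filter_subset _ _) (fun U hU => (Finset.mem_filter.mp hU).2)
      _ = (q ^ n - 1) * A' := by rw [Finset.sum_const, smul_eq_mul, hV₀card]
  -- transfer to ℝ
  have hqk1 : (0:ℝ) < (q : ℝ) ^ k - 1 := by
    have h7 : (1:ℝ) < (q : ℝ) ^ k := by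
      apply one_lt_pow₀ (by exact_mod_cast hq2.trans_lt' one_lt_two) (by omega)
    linarith
  rw [div_mul_eq_mul_div, le_div_iff₀ hqk1]
  have h1 : (1:ℕ) ≤ q ^ k := Nat.one_le_pow _ _ (by omega)
  have h2 : (1:ℕ) ≤ q ^ n := Nat.one_le_pow _ _ (by omega)
  have hR := (Nat.cast_le (α := ℝ)).mpr hkey
  push_cast [Nat.cast_sub h1, Nat.cast_sub h2] at hR
  exact hR
end

section
/- (Schönheim bound) Let q be a prime power and let n, k, r be integers with 1 ≤ r ≤ k ≤ n. Then C_q(n, k, r) ≥ ((q^n − 1)/(q^k − 1)) · C_q(n−1, k−1, r−1). -/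
open Module

open scoped Classical

section Aux

variable {F : Type} [Field F]

/-- Any subspace of dimension at most `k ≤ dim V` extends to one of dimension exactly `k`. -/
lemma exists_superspace {V : Type*} [AddCommGroup V] [Module F V] [FiniteDimensional F V]
    (k : ℕ) (hk : k ≤ finrank F V) (W : Submodule F V) (hW : finrank F W ≤ k) :
    ∃ U : Submodule F V, W ≤ U ∧ finrank F U = k := by
  induction k with
  | zero => exact ⟨W, le_rfl, Nat.le_zero.mp hW⟩
  | succ k ih =>
    rcases Nat.lt_or_ge (finrank F W) (k + 1) with h | h
    · obtain ⟨U, hWU, hU⟩ := ih (by omega) (by omega)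
      obtain ⟨m, hm⟩ := U.exists_of_finrank_lt (by omega)
      have hm0 : m ∉ U := by simpa using hm 1 one_ne_zero
      refine ⟨U ⊔ (F ∙ m), hWU.trans le_sup_left, ?_⟩
      have hinf : U ⊓ (F ∙ m) = ⊥ := by
        rw [eq_bot_iff]
        rintro x ⟨hxU, hxm⟩
        obtain ⟨r, rfl⟩ := Submodule.mem_span_singleton.mp hxm
        rcases eq_or_ne r 0 with rfl | hr
        · simp
        · exact absurd hxU (hm r hr)
      have hne : m ≠ 0 := fun h => hm0 (h ▸ U.zero_mem)
      have := Submodule.finrank_sup_add_finrank_inf_eq U (F ∙ m)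
      rw [hinf, finrank_bot, finrank_span_singleton hne, hU] at this
      omega
    · exact ⟨W, le_rfl, by omega⟩

/-- Rank computation for the image of a subspace containing the kernel. -/
lemma finrank_map_of_ker_le {V W : Type*} [AddCommGroup V] [Module F V] [FiniteDimensional F V]
    [AddCommGroup W] [Module F W] (f : V →ₗ[F] W) (U : Submodule F V)
    (h : LinearMap.ker f ≤ U) :
    finrank F (U.map f) + finrank F (LinearMap.ker f) = finrank F U := by
  have h1 := LinearMap.finrank_range_add_finrank_ker (f.domRestrict U)
  rw [LinearMap.range_domRestrict, LinearMap.ker_domRestrict] at h1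
  rwa [LinearEquiv.finrank_eq (Submodule.comapSubtypeEquivOfLe h)] at h1

/-- The key localization step: the subspaces of a covering design through a fixed nonzero
vector `v` induce a covering design in the quotient, hence there are at least
`𝒞_q(n-1,k-1,r-1)` of them. -/
lemma filter_card_ge (n k r : ℕ) (hr : 1 ≤ r) (hrk : r ≤ k) (hkn : k ≤ n)
    (C : Finset (Submodule F (Fin n → F))) (hC : IsCoveringDesign F n k r C)
    (v : Fin n → F) (hv : v ≠ 0) :
    minCoverSize F (n - 1) (k - 1) (r - 1) ≤ (C.filter (fun U => v ∈ U)).card := by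
  set P : Submodule F (Fin n → F) := F ∙ v with hPdef
  have hP : finrank F P = 1 := finrank_span_singleton hv
  have hQ : finrank F ((Fin n → F) ⧸ P) = n - 1 := by
    have h := P.finrank_quotient_add_finrank
    rw [hP, Module.finrank_fin_fun] at h
    omega
  obtain ⟨e⟩ : Nonempty (((Fin n → F) ⧸ P) ≃ₗ[F] (Fin (n - 1) → F)) :=
    FiniteDimensional.nonempty_linearEquiv_of_finrank_eq
      (by rw [hQ, Module.finrank_fin_fun])
  set f : (Fin n → F) →ₗ[F] (Fin (n - 1) → F) := (e : _ →ₗ[F] _).comp P.mkQ with hfdef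
  have hker : LinearMap.ker f = P := by
    rw [hfdef, LinearMap.ker_comp, LinearEquiv.ker, Submodule.comap_bot, Submodule.ker_mkQ]
  have hsurj : Function.Surjective f := e.surjective.comp P.mkQ_surjective
  have hdim : ∀ U : Submodule F (Fin n → F), P ≤ U →
      finrank F (U.map f) + 1 = finrank F U := by
    intro U hU
    have := finrank_map_of_ker_le f U (hker ▸ hU)
    rwa [hker, hP] at this
  have hvP : v ∈ P := Submodule.mem_span_singleton_self v
  set D : Finset (Submodule F (Fin (n - 1) → F)) :=
    (C.filter (fun U => v ∈ U)).image (fun U => U.map f) with hDdef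
  have hD : IsCoveringDesign F (n - 1) (k - 1) (r - 1) D := by
    constructor
    · intro U' hU'
      obtain ⟨U, hU, rfl⟩ := Finset.mem_image.mp hU'
      rw [Finset.mem_filter] at hU
      have hPU : P ≤ U := (Submodule.span_singleton_le_iff_mem v U).mpr hU.2
      have := hdim U hPU
      rw [hC.1 U hU.1] at this
      omega
    · intro W' hW'
      set W : Submodule F (Fin n → F) := W'.comap f with hWdef
      have hPW : P ≤ W := by
        rw [hWdef, ← hker]
        exact LinearMap.ker_le_comap f
      have hmapW : W.map f = W' := Submodule.map_comap_eq_of_surjective hsurj W'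
      have hrW : finrank F W = r := by
        have h1 := hdim W hPW
        rw [hmapW, hW'] at h1
        omega
      obtain ⟨U, hU, hWU⟩ := hC.2 W hrW
      refine ⟨U.map f, Finset.mem_image.mpr ⟨U, Finset.mem_filter.mpr ⟨hU, hPW (hvP) |> hWU⟩, rfl⟩,
        hmapW ▸ Submodule.map_mono hWU⟩
  calc minCoverSize F (n - 1) (k - 1) (r - 1) ≤ D.card :=
        Nat.sInf_le ⟨D, hD, rfl⟩
    _ ≤ (C.filter (fun U => v ∈ U)).card := Finset.card_image_le

end Aux

/-- **Schönheim bound.** `𝒞_q(n,k,r) ≥ ((q^n-1)/(q^k-1)) ⬝ 𝒞_q(n-1,k-1,r-1)`. -/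
theorem schonheim_bound (F : Type) [Field F] [Fintype F] (n k r : ℕ)
    (hr : 1 ≤ r) (hrk : r ≤ k) (hkn : k ≤ n) :
    (minCoverSize F n k r : ℝ) ≥
      (((Fintype.card F : ℝ) ^ n - 1) / ((Fintype.card F : ℝ) ^ k - 1)) *
        (minCoverSize F (n - 1) (k - 1) (r - 1) : ℝ) := by
  set q := Fintype.card F with hqdef
  have hq : 2 ≤ q := Fintype.one_lt_card
  -- the set of covering designs is nonempty
  have hfin : Finite (Submodule F (Fin n → F)) :=
    Finite.of_injective _ SetLike.coe_injective
  have : Fintype (Submodule F (Fin n → F)) := Fintype.ofFinite _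
  set C₀ : Finset (Submodule F (Fin n → F)) :=
    Finset.univ.filter (fun U => finrank F U = k) with hC₀def
  have hC₀ : IsCoveringDesign F n k r C₀ := by
    constructor
    · intro U hU
      exact (Finset.mem_filter.mp hU).2
    · intro W hW
      obtain ⟨U, hWU, hU⟩ := exists_superspace k (by rw [Module.finrank_fin_fun]; exact hkn) W
        (by rw [hW]; exact hrk)
      exact ⟨U, Finset.mem_filter.mpr ⟨Finset.mem_univ _, hU⟩, hWU⟩
  have hmem : minCoverSize F n k r ∈
      {M | ∃ C : Finset (Submodule F (Fin n → F)), IsCoveringDesign F n k r C ∧ C.card = M} :=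
    Nat.sInf_mem ⟨C₀.card, C₀, hC₀, rfl⟩
  obtain ⟨C, hC, hcard⟩ := hmem
  set M := minCoverSize F n k r with hMdef
  set M' := minCoverSize F (n - 1) (k - 1) (r - 1) with hM'def
  set S : Finset (Fin n → F) := Finset.univ.filter (fun v => v ≠ 0) with hSdef
  have hScard : S.card = q ^ n - 1 := by
    rw [hSdef, Finset.filter_ne', Finset.card_erase_of_mem (Finset.mem_univ _),
      Finset.card_univ, Fintype.card_fun, Fintype.card_fin]
  -- double counting
  have hcount : ∀ U ∈ C, (S.filter (fun v => v ∈ U)).card = q ^ k - 1 := by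
    intro U hU
    have h1 : S.filter (fun v => v ∈ U) = (Finset.univ.filter (fun v => v ∈ U)).erase 0 := by
      rw [hSdef]
      ext x
      simp [Finset.mem_filter, Finset.mem_erase, and_comm]
    have h2 : (Finset.univ.filter (fun v : Fin n → F => v ∈ U)).card = Fintype.card U := by
      rw [← Fintype.card_subtype]
    have h3 : Fintype.card U = q ^ k := by
      rw [card_eq_pow_finrank (K := F) (V := U), hC.1 U hU]
    rw [h1, Finset.card_erase_of_mem (by simp [U.zero_mem]), h2, h3]
  have hsum : ∑ v ∈ S, (C.filter (fun U => v ∈ U)).card = M * (q ^ k - 1) := by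
    have : ∑ v ∈ S, (C.filter (fun U => v ∈ U)).card
        = ∑ U ∈ C, (S.filter (fun v => v ∈ U)).card := by
      simp_rw [Finset.card_filter]
      exact Finset.sum_comm
    rw [this, Finset.sum_congr rfl hcount, Finset.sum_const, smul_eq_mul, hcard]
  have hineq : (q ^ n - 1) * M' ≤ M * (q ^ k - 1) := by
    rw [← hsum, ← hScard]
    calc S.card * M' = ∑ _v ∈ S, M' := by rw [Finset.sum_const, smul_eq_mul]
      _ ≤ ∑ v ∈ S, (C.filter (fun U => v ∈ U)).card :=
          Finset.sum_le_sum (fun v hv =>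
            filter_card_ge n k r hr hrk hkn C hC v (Finset.mem_filter.mp hv).2)
  -- pass to the reals
  have hq1 : (1 : ℝ) < (q : ℝ) := by exact_mod_cast hq
  have hb : (0 : ℝ) < (q : ℝ) ^ k - 1 := by
    have : (1 : ℝ) < (q : ℝ) ^ k := one_lt_pow₀ hq1 (by omega)
    linarith
  rw [ge_iff_le, div_mul_eq_mul_div, div_le_iff₀ hb]
  have h1 : 1 ≤ q ^ n := Nat.one_le_pow _ _ (by omega)
  have h2 : 1 ≤ q ^ k := Nat.one_le_pow _ _ (by omega)
  have hcast : ((q ^ n - 1 : ℕ) : ℝ) * (M' : ℝ) ≤ (M : ℝ) * ((q ^ k - 1 : ℕ) : ℝ) := by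
    exact_mod_cast hineq
  rw [Nat.cast_sub h1, Nat.cast_sub h2] at hcast
  push_cast at hcast ⊢
  linarith
end

section
/- Let q be a prime power, and let v and m be integers with v ≥ 2 and m ≥ 2, and let δ ≥ 0 be an integer. Then T_q(vm+δ, vm−v+1+δ, m) = (q^{vm}−1)/(q^m−1). -/
/-!
Lower bound, by induction on the codimension `c`: if the `m`-spaces in `C` meet every subspace
of codimension `c + 1`, then for each nonzero functional `f` those inside `ker f` meet every
subspace of `ker f` of codimension `c`, so there are at least `N_c = 1 + Q + ⋯ + Q^c` of them,
`Q = q^m`. A member of `C` lies in only `q^(n-m) - 1` of the `q^n - 1` kernels, so double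
counting gives `#C > Q · N_c`, i.e. `#C ≥ N_(c+1)`.

Upper bound: embed `K^v`, `K = 𝔽_(q^m)`, as an `F`-subspace of dimension `vm`; its `K`-lines
form a spread of `(Q^v - 1)/(Q - 1)` subspaces of dimension `m`. An `F`-subspace `U` of
codimension `< v` contains a `K`-line: the vectors `x` with `b_i • x ∈ U` for an `F`-basis
`(b_i)` of `K` form a subspace of codimension `≤ m · codim U < vm`.
-/

open Module

/-- `C` is a `q`-Turán design `T_q(n,k,r)`: a set of `r`-dimensional subspaces of
`F^n` such that every `k`-dimensional subspace contains at least one of them. -/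
def IsTuranDesign (F : Type) [Field F] (n k r : ℕ)
    (C : Finset (Submodule F (Fin n → F))) : Prop :=
  (∀ U ∈ C, finrank F ↥U = r) ∧
  ∀ W : Submodule F (Fin n → F), finrank F ↥W = k → ∃ U ∈ C, U ≤ W

/-- `𝒯_q(n,k,r)`: the minimum size of a `q`-Turán design `T_q(n,k,r)`. -/
noncomputable def minTuranSize (F : Type) [Field F] (n k r : ℕ) : ℕ :=
  sInf {M | ∃ C : Finset (Submodule F (Fin n → F)), IsTuranDesign F n k r C ∧ C.card = M}

open Finset
open scoped LinearAlgebra.Projectivization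

section Covering

variable {F V : Type*} [Field F] [AddCommGroup V] [Module F V]

def CoversCodim (C : Finset (Submodule F V)) (c : ℕ) : Prop :=
  ∀ W : Submodule F V, finrank F W + c = finrank F V → ∃ U ∈ C, U ≤ W

theorem CoversCodim.restrict [FiniteDimensional F V] {C : Finset (Submodule F V)} {c d : ℕ}
    (hC : CoversCodim C (c + d)) {H : Submodule F V} (hH : finrank F H + d = finrank F V)
    {D : Finset (Submodule F H)} (hD : ∀ U ∈ C, U ≤ H → U.comap H.subtype ∈ D) :
    CoversCodim D c := by
  intro W hW
  obtain ⟨U, hU, hUW⟩ := hC (W.map H.subtype) (by rw [Submodule.finrank_map_subtype_eq]; omega)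
  refine ⟨U.comap H.subtype, hD U hU (hUW.trans (Submodule.map_subtype_le H W)), ?_⟩
  calc U.comap H.subtype ≤ (W.map H.subtype).comap H.subtype := Submodule.comap_mono hUW
    _ = W := Submodule.comap_map_eq_of_injective H.injective_subtype W

theorem finrank_le_finrank_comap_add [FiniteDimensional F V] {W : Type*} [AddCommGroup W]
    [Module F W] [FiniteDimensional F W] (f : V →ₗ[F] W) (W₀ : Submodule F W) :
    finrank F V ≤ finrank F (W₀.comap f) + (finrank F W - finrank F W₀) := by
  have hker : LinearMap.ker (W₀.mkQ ∘ₗ f) = W₀.comap f := by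
    rw [LinearMap.ker_comp, Submodule.ker_mkQ]
  have hrange := Submodule.finrank_le (LinearMap.range (W₀.mkQ ∘ₗ f))
  rw [Submodule.finrank_quotient] at hrange
  have := (W₀.mkQ ∘ₗ f).finrank_range_add_finrank_ker
  rw [hker] at this
  omega

end Covering

open scoped Classical in
theorem card_filter_ne_zero_mem_add_one {R M : Type*} [Semiring R] [AddCommMonoid M] [Module R M]
    [Fintype M] (S : Submodule R M) : #{x | x ≠ 0 ∧ x ∈ S} + 1 = Nat.card S := by
  have : ({x | x ≠ 0 ∧ x ∈ S} : Finset M) = ({x | x ∈ S} : Finset M).erase 0 := by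
    ext
    simp [and_comm]
  rw [this, card_erase_add_one (by simp), Nat.card_eq_fintype_card, Fintype.card_subtype]

section LowerBound

variable {F V : Type*} [Field F] [Fintype F] [AddCommGroup V] [Module F V] [FiniteDimensional F V]

theorem natCard_dualAnnihilator (U : Submodule F V) :
    Nat.card U.dualAnnihilator = Fintype.card F ^ (finrank F V - finrank F U) := by
  rw [Module.natCard_eq_pow_finrank (K := F), Nat.card_eq_fintype_card]
  have := Subspace.finrank_add_finrank_dualAnnihilator_eq U
  congr 1
  omega

open scoped Classical in
theorem pow_mul_lt_card_of_le_card_filter_le_ker {m N : ℕ} (hm : 0 < m) (hN : 0 < N)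
    (hmV : m ≤ finrank F V) (C : Finset (Submodule F V)) (hdim : ∀ U ∈ C, m ≤ finrank F U)
    (hker : ∀ f : Dual F V, f ≠ 0 → N ≤ #{U ∈ C | U ≤ LinearMap.ker f}) :
    Fintype.card F ^ m * N < #C := by
  have : Finite (Dual F V) := Module.finite_of_finite F
  have := Fintype.ofFinite (Dual F V)
  set q := Fintype.card F
  set n := finrank F V
  have hq : 1 < q := Fintype.one_lt_card
  have hcount := card_mul_le_card_mul (fun f U => U ≤ LinearMap.ker f)
    (s := {f | f ≠ 0}) (t := C) (m := N) (n := q ^ (n - m) - 1)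
    (fun f hf => hker f (mem_filter.1 hf).2) fun U hU => by
      have hann : _ = q ^ (n - finrank F U) :=
        (card_filter_ne_zero_mem_add_one U.dualAnnihilator).trans (natCard_dualAnnihilator U)
      have hpow : q ^ (n - finrank F U) ≤ q ^ (n - m) :=
        Nat.pow_le_pow_right hq.le (by have := hdim U hU; omega)
      have hbelow : bipartiteBelow (fun f U => U ≤ LinearMap.ker f) {f | f ≠ 0} U
          = ({f | f ≠ 0 ∧ f ∈ U.dualAnnihilator} : Finset (Dual F V)) := by
        ext f
        simp [Submodule.mem_dualAnnihilator, SetLike.le_def]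
      rw [hbelow]
      omega
  have hall : #{f : Dual F V | f ≠ 0} + 1 = q ^ n := by
    have h := card_filter_ne_zero_mem_add_one (⊥ : Submodule F V).dualAnnihilator
    rw [natCard_dualAnnihilator, finrank_bot, Nat.sub_zero, Submodule.dualAnnihilator_bot] at h
    simpa using h
  have hsplit : q ^ n = q ^ m * q ^ (n - m) := by rw [← pow_add, Nat.add_sub_cancel' hmV]
  have hqm : 1 < q ^ m := Nat.one_lt_pow hm.ne' hq
  have hqnm : 1 ≤ q ^ (n - m) := Nat.one_le_pow _ _ (by omega)
  by_contra! hC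
  have hC' := Nat.mul_le_mul_right (q ^ (n - m) - 1) hC
  zify [hqnm, hqm.le] at hcount hC' hall hsplit
  nlinarith

theorem sum_pow_le_card_of_coversCodim {m c : ℕ} (hm : 0 < m) (hmc : m + c ≤ finrank F V)
    (C : Finset (Submodule F V)) (hdim : ∀ U ∈ C, m ≤ finrank F U) (hC : CoversCodim C c) :
    ∑ i ∈ range (c + 1), (Fintype.card F ^ m) ^ i ≤ #C := by
  induction c generalizing V with
  | zero =>
    obtain ⟨U, hU, -⟩ := hC ⊤ (by simp)
    simpa using card_pos.2 ⟨U, hU⟩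
  | succ c ih =>
    classical
    rw [geom_sum_succ]
    refine pow_mul_lt_card_of_le_card_filter_le_ker hm (by positivity) (by omega) C hdim
      fun f hf => ?_
    have hH := f.finrank_ker_add_one_of_ne_zero hf
    let D := {U ∈ C | U ≤ LinearMap.ker f}.image (Submodule.comap (LinearMap.ker f).subtype)
    have hDdim : ∀ U ∈ D, m ≤ finrank F U := by
      simp only [D, mem_image, mem_filter]
      rintro _ ⟨U, ⟨hU, hUH⟩, rfl⟩
      rw [(Submodule.comapSubtypeEquivOfLe hUH).finrank_eq]
      exact hdim U hU
    calc _ ≤ #D := ih (by omega) D hDdim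
          (hC.restrict hH fun U hU hUH => mem_image_of_mem _ (mem_filter.2 ⟨hU, hUH⟩))
      _ ≤ _ := card_image_le

end LowerBound

section Extension

variable {F K : Type*} [Field F] [Field K] [Algebra F K] [FiniteDimensional F K]

theorem exists_span_singleton_le_of_finrank_lt {V : Type*} [AddCommGroup V] [Module K V]
    [Module F V] [IsScalarTower F K V] [FiniteDimensional K V] (U : Submodule F V)
    (hU : finrank F V < finrank F U + finrank K V) :
    ∃ x : V, x ≠ 0 ∧ (K ∙ x).restrictScalars F ≤ U := by
  have : FiniteDimensional F V := Module.Finite.trans K V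
  let b := Module.finBasis F K
  let φ : V →ₗ[F] Fin (finrank F K) → V ⧸ U :=
    LinearMap.pi fun i => U.mkQ ∘ₗ DistribSMul.toLinearMap F V (b i)
  have hrange : finrank F (LinearMap.range φ) ≤ finrank F K * (finrank F V - finrank F U) := by
    refine (Submodule.finrank_le _).trans_eq ?_
    simp [Module.finrank_pi_fintype, Submodule.finrank_quotient]
  have hK : 0 < finrank F K := Module.finrank_pos
  have hcodim : finrank F K * (finrank F V - finrank F U) < finrank F V := by
    have := U.finrank_le
    calc _ < finrank F K * finrank K V := Nat.mul_lt_mul_of_pos_left (by omega) hK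
      _ = finrank F V := Module.finrank_mul_finrank F K V
  have hker : 0 < finrank F (LinearMap.ker φ) := by
    have := φ.finrank_range_add_finrank_ker
    omega
  obtain ⟨x, hx, hx0⟩ := Submodule.exists_mem_ne_zero_of_ne_bot
    (Submodule.one_le_finrank_iff.1 hker)
  refine ⟨x, hx0, ?_⟩
  have hbx (i : Fin (finrank F K)) : b i • x ∈ U := by
    simpa [φ, Submodule.Quotient.mk_eq_zero] using congr_fun (LinearMap.mem_ker.1 hx) i
  intro y hy
  obtain ⟨c, rfl⟩ := Submodule.mem_span_singleton.1 hy
  rw [← b.sum_repr c, Finset.sum_smul]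
  exact U.sum_mem fun i _ => by rw [smul_assoc]; exact U.smul_mem _ (hbx i)

theorem exists_coversCodim_card_le [Finite K] {W : Type*} [AddCommGroup W] [Module F W]
    [FiniteDimensional F W] {c v : ℕ} (hcv : c < v) (hvW : v * finrank F K ≤ finrank F W) :
    ∃ C : Finset (Submodule F W), (∀ U ∈ C, finrank F U = finrank F K) ∧ CoversCodim C c ∧
      #C ≤ ∑ i ∈ range v, Nat.card K ^ i := by
  classical
  have hV : finrank F (Fin v → K) = v * finrank F K := by
    rw [← Module.finrank_mul_finrank F K (Fin v → K), finrank_fin_fun, mul_comm]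
  obtain ⟨ι, hι⟩ := finrank_le_iff_exists_linearMap.1 (hV ▸ hvW)
  have := Fintype.ofFinite (ℙ K (Fin v → K))
  refine ⟨univ.image fun p : ℙ K (Fin v → K) => (p.submodule.restrictScalars F).map ι,
    ?_, ?_, ?_⟩
  · simp only [mem_image, mem_univ, true_and]
    rintro _ ⟨p, rfl⟩
    rw [← (Submodule.equivMapOfInjective ι hι _).finrank_eq]
    exact (Module.finrank_mul_finrank F K p.submodule).symm.trans
      (by rw [p.finrank_submodule, mul_one])
  · intro W₀ hW₀
    have := finrank_le_finrank_comap_add ι W₀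
    obtain ⟨x, hx0, hx⟩ := exists_span_singleton_le_of_finrank_lt (K := K) (W₀.comap ι)
      (by rw [finrank_fin_fun]; omega)
    refine ⟨_, mem_image_of_mem _ (mem_univ (Projectivization.mk K x hx0)), ?_⟩
    rwa [Projectivization.submodule_mk, Submodule.map_le_iff_le_comap]
  · calc _ ≤ #(univ : Finset (ℙ K (Fin v → K))) := card_image_le
      _ = _ := by
        rw [card_univ, Fintype.card_eq_nat_card,
          Projectivization.card_of_finrank K _ (finrank_fin_fun K)]

end Extension

section Turan

variable {F : Type} [Field F] {n k r : ℕ}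

theorem isTuranDesign_iff {c : ℕ} (hkc : k + c = n) (C : Finset (Submodule F (Fin n → F))) :
    IsTuranDesign F n k r C ↔ (∀ U ∈ C, finrank F U = r) ∧ CoversCodim C c := by
  have hW (W : Submodule F (Fin n → F)) : finrank F W + c = finrank F (Fin n → F) ↔
      finrank F W = k := by
    rw [finrank_fin_fun]
    omega
  simp only [IsTuranDesign, CoversCodim, hW]

theorem minTuranSize_eq {N : ℕ} (hle : ∀ C, IsTuranDesign F n k r C → N ≤ #C)
    (hex : ∃ C, IsTuranDesign F n k r C ∧ #C ≤ N) : minTuranSize F n k r = N := by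
  obtain ⟨C, hC, hCN⟩ := hex
  unfold minTuranSize
  refine le_antisymm (Nat.sInf_le ⟨C, hC, le_antisymm hCN (hle C hC)⟩) ?_
  obtain ⟨C', hC', hcard⟩ := Nat.sInf_mem (s := {M | ∃ C, IsTuranDesign F n k r C ∧ #C = M})
    ⟨#C, C, hC, rfl⟩
  exact hcard ▸ hle C' hC'

end Turan

/-- **Beutelspacher–Ueberberg.** `𝒯_q(vm+δ, vm-v+1+δ, m) = (q^(vm)-1)/(q^m-1)`
for `v ≥ 2`, `m ≥ 2`, `δ ≥ 0`. -/
theorem turan_normal_spread (F : Type) [Field F] [Fintype F] (v m δ : ℕ)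
    (hv : 2 ≤ v) (hm : 2 ≤ m) :
    (minTuranSize F (v * m + δ) (v * m - v + 1 + δ) m : ℝ) =
      ((Fintype.card F : ℝ) ^ (v * m) - 1) / ((Fintype.card F : ℝ) ^ m - 1) := by
  obtain ⟨p, _⟩ := CharP.exists F
  have : Fact p.Prime := ⟨(FiniteField.card F p).choose_spec.1⟩
  have : NeZero m := ⟨by omega⟩
  let K := FiniteField.Extension F p m
  have hK : finrank F K = m := FiniteField.finrank_extension F p m
  have hcardK : Nat.card K = Fintype.card F ^ m := by
    rw [FiniteField.natCard_extension, Nat.card_eq_fintype_card]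
  have hvm : v - 1 ≤ v * m - m := by
    rw [← Nat.sub_one_mul]
    exact Nat.le_mul_of_pos_right _ (by omega)
  have hkc : v * m - v + 1 + δ + (v - 1) = v * m + δ := by omega
  have hsize : minTuranSize F (v * m + δ) (v * m - v + 1 + δ) m =
      ∑ i ∈ range v, (Fintype.card F ^ m) ^ i := by
    refine minTuranSize_eq (fun C hC => ?_) ?_
    · rw [isTuranDesign_iff hkc] at hC
      have hmc : m + (v - 1) ≤ finrank F (Fin (v * m + δ) → F) := by
        rw [finrank_fin_fun]
        omega
      simpa [Nat.sub_add_cancel (by omega : 1 ≤ v)] using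
        sum_pow_le_card_of_coversCodim (by omega) hmc C (fun U hU => (hC.1 U hU).ge) hC.2
    · obtain ⟨C, hdim, hcov, hcard⟩ := exists_coversCodim_card_le (K := K)
        (W := Fin (v * m + δ) → F) (c := v - 1) (v := v) (by omega)
        (by rw [hK, finrank_fin_fun]; omega)
      exact ⟨C, (isTuranDesign_iff hkc C).2 ⟨fun U hU => (hdim U hU).trans hK, hcov⟩,
        hcardK ▸ hcard⟩
  have hq : (Fintype.card F : ℝ) ^ m ≠ 1 := by
    have : 1 < Fintype.card F := Fintype.one_lt_card
    exact (one_lt_pow₀ (by exact_mod_cast this) (by omega)).ne'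
  rw [hsize]
  push_cast
  rw [geom_sum_eq hq, ← pow_mul, mul_comm m v]
end

section
/- Let q be a prime power and let r and n be positive integers such that r+1 divides n. Then C_q(n, n − n/(r+1), r) = (q^n − 1)/(q^{n/(r+1)} − 1). -/
open Module

/-!
Write `n = (r + 1) m` and `Q = q ^ m`; both sides equal `1 + Q + ⋯ + Q ^ r`.

Lower bound: let `C` consist of subspaces of codimension `m` covering all `j`-subspaces. For
`v ≠ 0`, the members of `C` through `v`, taken modulo `⟨v⟩`, cover all `(j - 1)`-subspaces of the
quotient, so by induction at least `1 + Q + ⋯ + Q ^ (j - 1)` members contain `v`. Counting the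
pairs `(v, U)` with `0 ≠ v ∈ U ∈ C` then forces `|C| > Q (1 + ⋯ + Q ^ (j - 1))`.

Upper bound: identify `F_q ^ n` with `F_Q ^ (r + 1)`. The `F_Q`-hyperplanes are `rm`-dimensional
over `F_q`, there are `(Q ^ (r + 1) - 1) / (Q - 1)` of them, and an `r`-dimensional `F_q`-subspace
spans an `F_Q`-subspace of dimension at most `r`, which lies in one of them.
-/

open Finset
open scoped LinearAlgebra.Projectivization

section CodimensionBound

variable {F V : Type*} [Field F] [AddCommGroup V] [Module F V]

def CoversDim (C : Finset (Submodule F V)) (j : ℕ) : Prop :=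
  ∀ W : Submodule F V, finrank F W = j → ∃ U ∈ C, W ≤ U

lemma CoversDim.image_map {V' : Type*} [AddCommGroup V'] [Module F V']
    {C : Finset (Submodule F V)} {j : ℕ} (hC : CoversDim C j) (e : V ≃ₗ[F] V') :
    CoversDim (C.image (Submodule.map (e : V →ₗ[F] V'))) j := by
  intro W hW
  obtain ⟨U, hU, hWU⟩ :=
    hC (W.map (e.symm : V' →ₗ[F] V)) (by rw [LinearEquiv.finrank_map_eq, hW])
  exact ⟨U.map (e : V →ₗ[F] V'), mem_image_of_mem _ hU,
    by rwa [Submodule.map_equiv_eq_comap_symm, ← Submodule.map_le_iff_le_comap]⟩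

lemma finrank_map_mkQ_add [FiniteDimensional F V] {p U : Submodule F V} (h : p ≤ U) :
    finrank F (U.map p.mkQ) + finrank F p = finrank F U := by
  rw [← LinearEquiv.finrank_eq (Submodule.comapSubtypeEquivOfLe h),
    ← LinearMap.finrank_range_add_finrank_ker (p.mkQ.comp U.subtype),
    LinearMap.range_comp, Submodule.range_subtype, LinearMap.ker_comp, Submodule.ker_mkQ]

lemma finrank_map_mkQ_span_singleton_add_one [FiniteDimensional F V] {v : V} (hv : v ≠ 0)
    {U : Submodule F V} (hvU : v ∈ U) :
    finrank F (U.map (F ∙ v).mkQ) + 1 = finrank F U := by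
  rw [← finrank_span_singleton (K := F) hv]
  exact finrank_map_mkQ_add ((Submodule.span_singleton_le_iff_mem v U).mpr hvU)

open scoped Classical in
lemma CoversDim.map_mkQ_span_singleton [FiniteDimensional F V] {C : Finset (Submodule F V)}
    {j : ℕ} {v : V} (hv : v ≠ 0) (hC : CoversDim C (j + 1)) :
    CoversDim ({U ∈ C | v ∈ U}.image (Submodule.map (F ∙ v).mkQ)) j := by
  intro W hW
  have hvW : v ∈ W.comap (F ∙ v).mkQ :=
    Submodule.le_comap_mkQ _ W (Submodule.mem_span_singleton_self v)
  have hmap := Submodule.map_comap_eq_of_surjective (Submodule.mkQ_surjective (F ∙ v)) W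
  obtain ⟨U, hUC, hWU⟩ := hC (W.comap (F ∙ v).mkQ) (by
    have := finrank_map_mkQ_span_singleton_add_one hv hvW
    rw [hmap] at this
    omega)
  refine ⟨U.map (F ∙ v).mkQ, mem_image_of_mem _ (mem_filter.mpr ⟨hUC, hWU hvW⟩), ?_⟩
  exact hmap ▸ Submodule.map_mono hWU

open scoped Classical in
lemma card_filter_mem_erase_zero [Fintype F] [Fintype V] (U : Submodule F V) :
    #{v ∈ univ.erase (0 : V) | v ∈ U} = Fintype.card F ^ finrank F U - 1 := by
  rw [filter_erase, card_erase_of_mem (by simp), ← card_eq_pow_finrank (V := U),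
    ← Fintype.card_subtype]

open scoped Classical in
lemma sum_card_filter_mem_eq [Fintype F] [Fintype V] {C : Finset (Submodule F V)} {k : ℕ}
    (hdim : ∀ U ∈ C, finrank F U = k) :
    ∑ v ∈ univ.erase (0 : V), #{U ∈ C | v ∈ U} = #C * (Fintype.card F ^ k - 1) :=
  calc ∑ v ∈ univ.erase (0 : V), #{U ∈ C | v ∈ U}
      = ∑ U ∈ C, #{v ∈ univ.erase (0 : V) | v ∈ U} :=
        sum_card_bipartiteAbove_eq_sum_card_bipartiteBelow _
    _ = ∑ _U ∈ C, (Fintype.card F ^ k - 1) :=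
        sum_congr rfl fun U hU => by rw [card_filter_mem_erase_zero, hdim U hU]
    _ = #C * (Fintype.card F ^ k - 1) := by rw [sum_const, smul_eq_mul]

lemma mul_lt_of_mul_sub_one_le {a b c N : ℕ} (ha : 1 < a) (hb : 1 < b) (hN : 0 < N)
    (h : (a * b - 1) * N ≤ c * (a - 1)) : b * N < c := by
  refine Nat.lt_of_mul_lt_mul_right (a := a - 1) (h.trans_lt' ?_)
  have hab : 1 ≤ a * b := one_le_mul ha.le hb.le
  zify [ha.le, hab]
  nlinarith

theorem geom_sum_le_card_of_coversDim [Fintype F] [FiniteDimensional F V] {k m j : ℕ}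
    (hm : 0 < m) (hj : j ≤ k) (hV : finrank F V = k + m) {C : Finset (Submodule F V)}
    (hdim : ∀ U ∈ C, finrank F U = k) (hC : CoversDim C j) :
    ∑ i ∈ range (j + 1), (Fintype.card F ^ m) ^ i ≤ #C := by
  induction j generalizing V k with
  | zero =>
    obtain ⟨U, hU, -⟩ := hC ⊥ (finrank_bot F V)
    simpa using card_pos.mpr ⟨U, hU⟩
  | succ j ih =>
    classical
    have : Finite V := Module.finite_of_finite F
    have : Fintype V := Fintype.ofFinite V
    obtain ⟨k, rfl⟩ : ∃ k', k = k' + 1 := ⟨k - 1, by omega⟩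
    set q := Fintype.card F
    set N := ∑ i ∈ range (j + 1), (q ^ m) ^ i
    have hfiber : ∀ v ∈ univ.erase (0 : V), N ≤ #{U ∈ C | v ∈ U} := by
      intro v hv
      have hv : v ≠ 0 := ne_of_mem_erase hv
      refine (ih (V := V ⧸ F ∙ v) (k := k) (by omega) ?_ ?_
        (hC.map_mkQ_span_singleton hv)).trans card_image_le
      · have := (F ∙ v).finrank_quotient_add_finrank
        rw [finrank_span_singleton hv] at this
        omega
      · simp only [mem_image, mem_filter, forall_exists_index, and_imp]
        rintro _ U hUC hvU rfl
        have := finrank_map_mkQ_span_singleton_add_one hv hvU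
        rw [hdim U hUC] at this
        omega
    have hcount : (q ^ (k + 1) * q ^ m - 1) * N ≤ #C * (q ^ (k + 1) - 1) :=
      calc (q ^ (k + 1) * q ^ m - 1) * N = ∑ _v ∈ univ.erase (0 : V), N := by
            rw [sum_const, card_erase_of_mem (mem_univ 0), card_univ,
              card_eq_pow_finrank (K := F), hV, ← pow_add, smul_eq_mul, mul_comm]
        _ ≤ ∑ v ∈ univ.erase (0 : V), #{U ∈ C | v ∈ U} := sum_le_sum hfiber
        _ = #C * (q ^ (k + 1) - 1) := sum_card_filter_mem_eq hdim
    have hq : 1 < q := Fintype.one_lt_card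
    rw [geom_sum_succ]
    exact mul_lt_of_mul_sub_one_le (Nat.one_lt_pow (by omega) hq) (Nat.one_lt_pow hm.ne' hq)
      (by positivity) hcount

end CodimensionBound

section Hyperplanes

open Projectivization

variable {F K V : Type*} [Field F] [Field K] [Algebra F K] [AddCommGroup V] [Module K V]
  [Module F V] [IsScalarTower F K V]

lemma finrank_span_le_finrank (W : Submodule F V) [FiniteDimensional F W] :
    finrank K (Submodule.span K (W : Set V)) ≤ finrank F W := by
  let b := finBasis F W
  have hW : Submodule.span F (Set.range (W.subtype ∘ b)) = W := by
    rw [Set.range_comp, Submodule.span_image, b.span_eq, Submodule.map_top,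
      Submodule.range_subtype]
  calc finrank K (Submodule.span K (W : Set V))
      = finrank K (Submodule.span K (Set.range (W.subtype ∘ b))) := by
        rw [← Submodule.span_span_of_tower F K (Set.range (W.subtype ∘ b)), hW]
    _ ≤ finrank F W := (finrank_range_le_card _).trans_eq (Fintype.card_fin _)

lemma dualCoannihilator_submodule_injective :
    Function.Injective fun p : ℙ K (Dual K V) => p.submodule.dualCoannihilator := by
  intro p p' h
  apply submodule_injective
  simpa only [Subspace.dualCoannihilator_dualAnnihilator_eq] using
    congrArg Submodule.dualAnnihilator h

variable [FiniteDimensional K V]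

lemma finrank_dualCoannihilator_submodule_add_one (p : ℙ K (Dual K V)) :
    finrank K p.submodule.dualCoannihilator + 1 = finrank K V := by
  rw [← Subspace.finrank_add_finrank_dualCoannihilator_eq p.submodule, finrank_submodule,
    add_comm]

lemma exists_le_dualCoannihilator_submodule {T : Submodule K V} (hT : T ≠ ⊤) :
    ∃ p : ℙ K (Dual K V), T ≤ p.submodule.dualCoannihilator := by
  obtain ⟨φ, hφT, hφ⟩ := Submodule.exists_mem_ne_zero_of_ne_bot
    (mt Submodule.dualAnnihilator_eq_bot_iff.mp hT)
  refine ⟨mk K φ hφ, ?_⟩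
  rw [submodule_mk, ← Submodule.le_dualAnnihilator_iff_le_dualCoannihilator,
    Submodule.span_singleton_le_iff_mem]
  exact hφT

theorem exists_coversDim_card_eq_geom_sum [Finite K] [FiniteDimensional F K] {r : ℕ}
    (hV : finrank K V = r + 1) :
    ∃ C : Finset (Submodule F V), (∀ U ∈ C, finrank F U = finrank F K * r) ∧ CoversDim C r ∧
      #C = ∑ i ∈ range (r + 1), Nat.card K ^ i := by
  classical
  have : FiniteDimensional F V := Module.Finite.trans K V
  have : Finite (ℙ K (Dual K V)) := (finite_iff_of_finite K (Dual K V)).mpr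
    (Module.finite_of_finite K)
  have : Fintype (ℙ K (Dual K V)) := Fintype.ofFinite _
  refine ⟨univ.image fun p : ℙ K (Dual K V) => p.submodule.dualCoannihilator.restrictScalars F,
    ?_, ?_, ?_⟩
  · simp only [mem_image, mem_univ, true_and, forall_exists_index, forall_apply_eq_imp_iff]
    intro p
    have hH := finrank_dualCoannihilator_submodule_add_one p
    rw [hV] at hH
    rw [← finrank_mul_finrank F K,
      LinearEquiv.finrank_eq (Submodule.restrictScalarsEquiv F K V _),
      show finrank K p.submodule.dualCoannihilator = r by omega]
  · intro W hW
    have hT : Submodule.span K (W : Set V) ≠ ⊤ := by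
      intro htop
      have := finrank_span_le_finrank (K := K) W
      rw [htop, finrank_top] at this
      omega
    obtain ⟨p, hp⟩ := exists_le_dualCoannihilator_submodule hT
    exact ⟨_, mem_image_of_mem _ (mem_univ p), fun x hx => hp (Submodule.subset_span hx)⟩
  · rw [card_image_of_injective _ fun p p' h =>
      dualCoannihilator_submodule_injective (Submodule.restrictScalars_injective F K V h),
      card_univ, Fintype.card_eq_nat_card]
    exact card_of_finrank K (Dual K V) (by rw [Subspace.dual_finrank_eq, hV])

end Hyperplanes

section CoveringDesign

variable (F : Type) [Field F] [Fintype F] {m : ℕ} (hm : 0 < m) (r : ℕ)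
include hm

theorem exists_isCoveringDesign_card_eq_geom_sum :
    ∃ C, IsCoveringDesign F ((r + 1) * m) (r * m) r C ∧
      #C = ∑ i ∈ range (r + 1), (Fintype.card F ^ m) ^ i := by
  obtain ⟨p, _⟩ := CharP.exists F
  have : Fact p.Prime := ⟨CharP.char_is_prime F p⟩
  have : NeZero m := ⟨hm.ne'⟩
  let K := FiniteField.Extension F p m
  have hKm : finrank F K = m := FiniteField.finrank_extension F p m
  obtain ⟨C, hdim, hC, hcard⟩ := exists_coversDim_card_eq_geom_sum (F := F) (K := K)
    (V := Fin (r + 1) → K) (Module.finrank_fin_fun K)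
  let e : (Fin (r + 1) → K) ≃ₗ[F] (Fin ((r + 1) * m) → F) :=
    LinearEquiv.ofFinrankEq _ _ (by
      rw [← finrank_mul_finrank F K, hKm, Module.finrank_fin_fun, Module.finrank_fin_fun,
        mul_comm])
  have hdim' : ∀ U' ∈ C.image (Submodule.map
      (e : (Fin (r + 1) → K) →ₗ[F] Fin ((r + 1) * m) → F)), finrank F U' = r * m := by
    simp only [mem_image, forall_exists_index, and_imp]
    rintro _ U hU rfl
    rw [LinearEquiv.finrank_map_eq, hdim U hU, hKm, mul_comm]
  refine ⟨_, ⟨hdim', hC.image_map e⟩, ?_⟩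
  rw [card_image_of_injective _ (Submodule.map_injective_of_injective e.injective), hcard,
    FiniteField.natCard_extension, Nat.card_eq_fintype_card]

theorem geom_sum_le_card_of_isCoveringDesign
    {C : Finset (Submodule F (Fin ((r + 1) * m) → F))}
    (hC : IsCoveringDesign F ((r + 1) * m) (r * m) r C) :
    ∑ i ∈ range (r + 1), (Fintype.card F ^ m) ^ i ≤ #C :=
  geom_sum_le_card_of_coversDim hm (Nat.le_mul_of_pos_right r hm) (by simp [add_mul]) hC.1 hC.2

theorem minCoverSize_eq_geom_sum :
    minCoverSize F ((r + 1) * m) (r * m) r = ∑ i ∈ range (r + 1), (Fintype.card F ^ m) ^ i := by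
  obtain ⟨C, hC, hcard⟩ := exists_isCoveringDesign_card_eq_geom_sum F hm r
  refine le_antisymm (Nat.sInf_le ⟨C, hC, hcard⟩) (le_csInf ⟨_, C, hC, hcard⟩ ?_)
  rintro _ ⟨C', hC', rfl⟩
  exact geom_sum_le_card_of_isCoveringDesign F hm r hC'

end CoveringDesign

theorem cover_spread_general (F : Type) [Field F] [Fintype F] (n r : ℕ)
    (hn : 0 < n) (hdvd : (r + 1) ∣ n) :
    (minCoverSize F n (n - n / (r + 1)) r : ℝ) =
      ((Fintype.card F : ℝ) ^ n - 1) / ((Fintype.card F : ℝ) ^ (n / (r + 1)) - 1) := by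
  obtain ⟨m, rfl⟩ := hdvd
  have hm : 0 < m := pos_of_mul_pos_right hn (Nat.zero_le _)
  have hq : (1 : ℝ) < (Fintype.card F : ℝ) ^ m :=
    one_lt_pow₀ (by exact_mod_cast Fintype.one_lt_card) hm.ne'
  rw [Nat.mul_div_cancel_left m r.succ_pos, show (r + 1) * m - m = r * m by
    rw [add_mul, one_mul, Nat.add_sub_cancel], minCoverSize_eq_geom_sum F hm r]
  push_cast
  rw [geom_sum_eq hq.ne', mul_comm, pow_mul]

/-- If `r+1` divides `n` then `𝒞_q(n, n - n/(r+1), r) = (q^n-1)/(q^(n/(r+1))-1)`. -/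
theorem cover_spread (F : Type) [Field F] [Fintype F] (n r : ℕ)
    (hn : 0 < n) (hr : 0 < r) (hdvd : (r + 1) ∣ n) :
    (minCoverSize F n (n - n / (r + 1)) r : ℝ) =
      ((Fintype.card F : ℝ) ^ n - 1) / ((Fintype.card F : ℝ) ^ (n / (r + 1)) - 1) :=
  cover_spread_general F n r hn hdvd
end
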